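/- For x > n > 0 real and J_{13/2} the Bessel function of the first kind of order 13/2, the derivative in x of x³ J_{13/2}(4πn/x) satisfies |d/dx (x³ J_{13/2}(4πn/x))| ≪ n^{9/2} x^{−5/2}, i.e. n^{−7/2}(x³ J_{13/2}(4πn/x))' ≪ n x^{−5/2}, with absolute implied constant. -/
import Mathlib


/-- The Bessel function of the first kind of order `ν` (for positive argument),
defined by its power series, with `rpow` for the real powers. -/
noncomputable def besselJ (ν x : ℝ) : ℝ :=
  ∑' m : ℕ, ((-1) ^ m / ((Nat.factorial m : ℝ) * Real.Gamma ((m : ℝ) + ν + 1))) *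
    (x / 2) ^ (ν + 2 * (m : ℝ))

open Real Set

lemma gamma_lower (m : ℕ) : Real.Gamma (15 / 2) ≤ Real.Gamma ((m : ℝ) + 15 / 2) := by
  induction m with
  | zero => simp
  | succ k ih =>
    have hpos : (0 : ℝ) < (k : ℝ) + 15 / 2 := by positivity
    have h : ((k + 1 : ℕ) : ℝ) + 15 / 2 = ((k : ℝ) + 15 / 2) + 1 := by push_cast; ring
    rw [h, Real.Gamma_add_one hpos.ne']
    calc Real.Gamma (15 / 2) ≤ Real.Gamma ((k : ℝ) + 15 / 2) := ih
      _ ≤ ((k : ℝ) + 15 / 2) * Real.Gamma ((k : ℝ) + 15 / 2) :=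
        le_mul_of_one_le_left (Real.Gamma_pos_of_pos hpos).le (by linarith)

lemma coeff_bound (m : ℕ) :
    (7 / 2 + 2 * (m : ℝ)) ≤ 4 * 2 ^ m := by
  induction m with
  | zero => norm_num
  | succ k ih =>
    have h2 : (2 : ℝ) ≤ 4 * 2 ^ k := by
      have : (1 : ℝ) ≤ 2 ^ k := one_le_pow₀ (by norm_num)
      linarith
    push_cast
    calc (7 / 2 + 2 * ((k : ℝ) + 1)) = (7 / 2 + 2 * (k : ℝ)) + 2 := by ring
      _ ≤ 4 * 2 ^ k + 4 * 2 ^ k := by linarith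
      _ = 4 * 2 ^ (k + 1) := by ring

theorem bessel_derivative_bound :
    ∃ C : ℝ, 0 < C ∧ ∀ n x : ℝ, 0 < n → n < x →
      |deriv (fun y : ℝ => y ^ 3 * besselJ (13 / 2) (4 * Real.pi * n / y)) x| ≤
        C * n ^ ((9 : ℝ) / 2) * x ^ (-(5 : ℝ) / 2) := by
  have hπ : (0 : ℝ) < π := Real.pi_pos
  set G : ℝ := Real.Gamma (15 / 2) with hGdef
  have hG : 0 < G := Real.Gamma_pos_of_pos (by norm_num)
  set W : ℕ → ℝ := fun m => (2 * π) ^ ((13 : ℝ) / 2) / G * 4 * ((8 * π ^ 2) ^ m / (Nat.factorial m)) with hWdef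
  have hWpos : ∀ m, 0 < W m := by
    intro m
    have : (0:ℝ) < (Nat.factorial m : ℝ) := by positivity
    positivity
  have hWsum : Summable W := by
    simpa [hWdef, mul_div_assoc] using
      (Real.summable_pow_div_factorial (8 * π ^ 2)).mul_left ((2 * π) ^ ((13 : ℝ) / 2) / G * 4)
  refine ⟨∑' m, W m, Summable.tsum_pos hWsum (fun m => (hWpos m).le) 0 (hWpos 0), ?_⟩
  intro n x hn hx
  have hx0 : (0 : ℝ) < x := hn.trans hx
  -- notation
  set e : ℕ → ℝ := fun m => 13 / 2 + 2 * (m : ℝ) with hedef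
  set c : ℕ → ℝ := fun m => (-1) ^ m / ((Nat.factorial m : ℝ) * Real.Gamma ((m : ℝ) + 13 / 2 + 1)) with hcdef
  set a : ℕ → ℝ := fun m => c m * (2 * π * n) ^ (e m) with hadef
  set g : ℕ → ℝ → ℝ := fun m y => a m * y ^ ((3 : ℝ) - e m) with hgdef
  set g' : ℕ → ℝ → ℝ := fun m y => a m * (((3 : ℝ) - e m) * y ^ ((3 : ℝ) - e m - 1)) with hg'def
  have hGam : ∀ m : ℕ, 0 < Real.Gamma ((m : ℝ) + 13 / 2 + 1) := by
    intro m; exact Real.Gamma_pos_of_pos (by positivity)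
  have hGamG : ∀ m : ℕ, G ≤ Real.Gamma ((m : ℝ) + 13 / 2 + 1) := by
    intro m
    have : ((m : ℝ) + 13 / 2 + 1) = (m : ℝ) + 15 / 2 := by ring
    rw [this]; exact gamma_lower m
  have hcabs : ∀ m, |c m| ≤ 1 / ((Nat.factorial m : ℝ) * G) := by
    intro m
    have hfac : (0:ℝ) < (Nat.factorial m : ℝ) := by positivity
    have h1 : |c m| = 1 / ((Nat.factorial m : ℝ) * Real.Gamma ((m : ℝ) + 13 / 2 + 1)) := by
      rw [hcdef]
      simp only [abs_div, abs_pow, abs_neg, abs_one, one_pow]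
      rw [abs_of_pos (by positivity : (0:ℝ) < (Nat.factorial m : ℝ) * Real.Gamma ((m : ℝ) + 13 / 2 + 1))]
    rw [h1]
    apply one_div_le_one_div_of_le (by positivity)
    exact mul_le_mul_of_nonneg_left (hGamG m) hfac.le
  -- the key coefficient bound
  have hkey : ∀ m : ℕ, |c m| * (e m - 3) * (2 * π) ^ (e m) ≤ W m := by
    intro m
    have hfac : (0:ℝ) < (Nat.factorial m : ℝ) := by positivity
    have h2π : (0:ℝ) < 2 * π := by positivity
    have hsplit : (2 * π) ^ (e m) = (2 * π) ^ ((13 : ℝ) / 2) * (4 * π ^ 2) ^ m := by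
      rw [hedef]
      have : (2 * (m : ℝ)) = ((2 * m : ℕ) : ℝ) := by push_cast; ring
      rw [Real.rpow_add h2π, this, Real.rpow_natCast, pow_mul,
        show ((2:ℝ) * π) ^ 2 = 4 * π ^ 2 from by ring]
    have he3 : e m - 3 = 7 / 2 + 2 * (m : ℝ) := by rw [hedef]; ring
    calc |c m| * (e m - 3) * (2 * π) ^ (e m)
        ≤ (1 / ((Nat.factorial m : ℝ) * G)) * (4 * 2 ^ m) * ((2 * π) ^ ((13 : ℝ) / 2) * (4 * π ^ 2) ^ m) := by
          rw [hsplit]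
          apply mul_le_mul_of_nonneg_right _ (by positivity)
          apply mul_le_mul (hcabs m) (by rw [he3]; exact coeff_bound m)
            (by rw [he3]; positivity) (by positivity)
      _ = (2 * π) ^ ((13 : ℝ) / 2) / G * 4 * ((2 ^ m * (4 * π ^ 2) ^ m) / (Nat.factorial m)) := by
          field_simp
      _ = W m := by
          rw [hWdef, ← mul_pow, show (2:ℝ) * (4 * π ^ 2) = 8 * π ^ 2 from by ring]
  -- pointwise identity on Ioi 0
  have hfun : ∀ y : ℝ, 0 < y →
      y ^ 3 * besselJ (13 / 2) (4 * π * n / y) = ∑' m, g m y := by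
    intro y hy
    rw [besselJ, ← tsum_mul_left]
    apply tsum_congr
    intro m
    have harg : 4 * π * n / y / 2 = 2 * π * n / y := by ring
    have h2πn : (0:ℝ) ≤ 2 * π * n := by positivity
    have hdiv : (2 * π * n / y) ^ (e m) = (2 * π * n) ^ (e m) / y ^ (e m) :=
      Real.div_rpow h2πn hy.le _
    have hy3 : y ^ (3:ℕ) = y ^ ((3:ℝ)) := by
      rw [← Real.rpow_natCast y 3]; norm_num
    have hysub : y ^ ((3 : ℝ) - e m) = y ^ ((3:ℝ)) / y ^ (e m) := Real.rpow_sub hy _ _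
    show y ^ 3 * (c m * (4 * π * n / y / 2) ^ (e m)) = a m * y ^ ((3 : ℝ) - e m)
    rw [harg, hdiv, hadef, hysub, hy3]
    ring
  -- term derivatives
  have hderiv : ∀ m : ℕ, ∀ y : ℝ, y ∈ Ioi n → HasDerivAt (g m) (g' m y) y := by
    intro m y hy
    have hy0 : y ≠ 0 := (hn.trans hy).ne'
    exact (Real.hasDerivAt_rpow_const (Or.inl hy0)).const_mul (a m)
  -- uniform bound on Ioi n
  set u : ℕ → ℝ := fun m => n ^ (2:ℝ) * W m with hudef
  have husum : Summable u := hWsum.mul_left _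
  have habs_a : ∀ m, |a m| = |c m| * (2 * π * n) ^ (e m) := by
    intro m
    rw [hadef, abs_mul, abs_of_pos (Real.rpow_pos_of_pos (by positivity) _)]
  have he3pos : ∀ m, (0:ℝ) < e m - 3 := by
    intro m
    have h := Nat.cast_nonneg (α := ℝ) m
    simp only [hedef]
    linarith
  have hg'bound : ∀ m : ℕ, ∀ y : ℝ, y ∈ Ioi n → ‖g' m y‖ ≤ u m := by
    intro m y hy
    have hyn : n < y := hy
    have hy0 : (0:ℝ) < y := hn.trans hyn
    have h1 : ‖g' m y‖ = |a m| * (e m - 3) * y ^ ((3:ℝ) - e m - 1) := by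
      rw [hg'def]
      simp only [Real.norm_eq_abs, abs_mul]
      rw [abs_of_pos (Real.rpow_pos_of_pos hy0 _), abs_sub_comm,
        abs_of_pos (by linarith [he3pos m] : (0:ℝ) < e m - 3)]
      ring
    rw [h1]
    have hyle : y ^ ((3:ℝ) - e m - 1) ≤ n ^ ((3:ℝ) - e m - 1) := by
      apply Real.rpow_le_rpow_of_nonpos hn hyn.le
      have := he3pos m; linarith
    calc |a m| * (e m - 3) * y ^ ((3:ℝ) - e m - 1)
        ≤ |a m| * (e m - 3) * n ^ ((3:ℝ) - e m - 1) := by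
          apply mul_le_mul_of_nonneg_left hyle
          exact mul_nonneg (abs_nonneg _) (he3pos m).le
      _ = |c m| * (e m - 3) * (2 * π) ^ (e m) * (n ^ (e m) * n ^ ((3:ℝ) - e m - 1)) := by
          rw [habs_a, mul_rpow (by positivity) hn.le]; ring
      _ = |c m| * (e m - 3) * (2 * π) ^ (e m) * n ^ (2:ℝ) := by
          rw [← Real.rpow_add hn, show e m + ((3:ℝ) - e m - 1) = 2 from by ring]
      _ ≤ W m * n ^ (2:ℝ) :=
          mul_le_mul_of_nonneg_right (hkey m) (Real.rpow_nonneg hn.le _)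
      _ = u m := by rw [hudef]; ring
  -- summability at the point x
  have hg0 : Summable fun m => g m x := by
    apply Summable.of_abs
    apply Summable.of_nonneg_of_le (fun m => abs_nonneg _) _ (hWsum.mul_left (n ^ (3:ℝ)))
    intro m
    have hxe : x ^ ((3:ℝ) - e m) ≤ n ^ ((3:ℝ) - e m) := by
      apply Real.rpow_le_rpow_of_nonpos hn hx.le
      have := he3pos m; linarith
    have h1 : |g m x| = |a m| * x ^ ((3:ℝ) - e m) := by
      rw [hgdef, abs_mul, abs_of_pos (Real.rpow_pos_of_pos hx0 _)]
    rw [h1]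
    calc |a m| * x ^ ((3:ℝ) - e m) ≤ |a m| * n ^ ((3:ℝ) - e m) :=
          mul_le_mul_of_nonneg_left hxe (abs_nonneg _)
      _ = |c m| * (2 * π) ^ (e m) * (n ^ (e m) * n ^ ((3:ℝ) - e m)) := by
          rw [habs_a, mul_rpow (by positivity) hn.le]; ring
      _ = |c m| * (2 * π) ^ (e m) * n ^ (3:ℝ) := by
          rw [← Real.rpow_add hn, show e m + ((3:ℝ) - e m) = 3 from by ring]
      _ ≤ W m * n ^ (3:ℝ) := by
          apply mul_le_mul_of_nonneg_right _ (Real.rpow_nonneg hn.le _)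
          calc |c m| * (2 * π) ^ (e m) ≤ |c m| * (e m - 3) * (2 * π) ^ (e m) := by
                apply mul_le_mul_of_nonneg_right _ (Real.rpow_nonneg (by positivity) _)
                have h1e : (1:ℝ) ≤ e m - 3 := by
                  have h := Nat.cast_nonneg (α := ℝ) m
                  simp only [hedef]; linarith
                nlinarith [abs_nonneg (c m)]
            _ ≤ W m := hkey m
      _ = n ^ (3:ℝ) * W m := by ring
  -- differentiate the series
  have hx_mem : x ∈ Ioi n := hx
  have hsum_deriv : HasDerivAt (fun z => ∑' m, g m z) (∑' m, g' m x) x :=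
    hasDerivAt_tsum_of_isPreconnected husum isOpen_Ioi isPreconnected_Ioi
      hderiv hg'bound hx_mem hg0 hx_mem
  -- transfer to the original function
  have hEq : (fun y : ℝ => y ^ 3 * besselJ (13 / 2) (4 * π * n / y)) =ᶠ[nhds x]
      (fun z => ∑' m, g m z) := by
    filter_upwards [Ioi_mem_nhds hx0] with y hy using hfun y hy
  have hD : HasDerivAt (fun y : ℝ => y ^ 3 * besselJ (13 / 2) (4 * π * n / y))
      (∑' m, g' m x) x := hsum_deriv.congr_of_eventuallyEq hEq
  rw [hD.deriv]
  -- final estimate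
  have hterm : ∀ m : ℕ, |g' m x| ≤ W m * (n ^ ((9:ℝ)/2) * x ^ (-(5:ℝ)/2)) := by
    intro m
    have h1 : |g' m x| = |a m| * (e m - 3) * x ^ ((3:ℝ) - e m - 1) := by
      rw [hg'def]
      simp only [abs_mul]
      rw [abs_of_pos (Real.rpow_pos_of_pos hx0 _), abs_sub_comm,
        abs_of_pos (by linarith [he3pos m] : (0:ℝ) < e m - 3)]
      ring
    have hratio : n ^ (e m) * x ^ ((3:ℝ) - e m - 1) ≤ n ^ ((9:ℝ)/2) * x ^ (-(5:ℝ)/2) := by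
      have hnx : n / x ≤ 1 := (div_le_one hx0).mpr hx.le
      have hexp : (0:ℝ) ≤ e m - 9/2 := by
        have h := Nat.cast_nonneg (α := ℝ) m
        simp only [hedef]; linarith
      have hle1 : (n / x) ^ (e m - 9/2) ≤ 1 :=
        Real.rpow_le_one (by positivity) hnx hexp
      have hid : n ^ (e m) * x ^ ((3:ℝ) - e m - 1)
          = (n ^ ((9:ℝ)/2) * x ^ (-(5:ℝ)/2)) * (n / x) ^ (e m - 9/2) := by
        rw [Real.div_rpow hn.le hx0.le,
          div_eq_mul_inv (n ^ (e m - 9/2)) (x ^ (e m - 9/2)), ← Real.rpow_neg hx0.le,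
          mul_mul_mul_comm, ← Real.rpow_add hn, ← Real.rpow_add hx0,
          show (9:ℝ)/2 + (e m - 9/2) = e m from by ring,
          show -(5:ℝ)/2 + -(e m - 9/2) = (3:ℝ) - e m - 1 from by ring]
      rw [hid]
      exact mul_le_of_le_one_right
        (mul_nonneg (Real.rpow_nonneg hn.le _) (Real.rpow_nonneg hx0.le _)) hle1
    rw [h1]
    calc |a m| * (e m - 3) * x ^ ((3:ℝ) - e m - 1)
        = |c m| * (e m - 3) * (2 * π) ^ (e m) * (n ^ (e m) * x ^ ((3:ℝ) - e m - 1)) := by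
          rw [habs_a, mul_rpow (by positivity) hn.le]; ring
      _ ≤ W m * (n ^ ((9:ℝ)/2) * x ^ (-(5:ℝ)/2)) := by
          apply mul_le_mul (hkey m) hratio
            (mul_nonneg (Real.rpow_nonneg hn.le _) (Real.rpow_nonneg hx0.le _))
            (hWpos m).le
  have hg'sum : Summable fun m => ‖g' m x‖ := by
    apply Summable.of_nonneg_of_le (fun m => norm_nonneg _) _
      (hWsum.mul_right (n ^ ((9:ℝ)/2) * x ^ (-(5:ℝ)/2)))
    intro m
    simpa using hterm m
  calc |∑' m, g' m x| ≤ ∑' m, ‖g' m x‖ := norm_tsum_le_tsum_norm hg'sum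
    _ ≤ ∑' m, W m * (n ^ ((9:ℝ)/2) * x ^ (-(5:ℝ)/2)) := by
        apply Summable.tsum_le_tsum _ hg'sum (hWsum.mul_right _)
        intro m; simpa using hterm m
    _ = (∑' m, W m) * (n ^ ((9:ℝ)/2) * x ^ (-(5:ℝ)/2)) := tsum_mul_right
    _ = (∑' m, W m) * n ^ ((9:ℝ)/2) * x ^ (-(5:ℝ)/2) := by ring
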